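/- arXiv:1610.02940 — 7 statements merged into one kernel-verified Lean document; each statement's English description precedes it below -/
import Mathlib

section
/- Let K ⊆ X′′ be a cone containing 0 such that z + n ∈ K whenever z ∈ K and n ∈ X′′ with n ≤ 0, and let K̄ denote the closure of K in the norm topology of X′′. Then for every a ∈ X′′ one has D(a;K) = D(a;K̄) ≤ ‖a‖; moreover, if D(a;K) > −∞, then there exists z_a ∈ K̄ satisfying a = z_a + D(a;K̄)•I(e). -/
/-
Since `I e` is an order unit of the bidual, `‖w‖ < ε` forces `w ≤ ε • I e`. Adding the
nonpositive element `(y - z) - ε • I e` to `z ∈ K` therefore shows that `y - ε • I e ∈ K`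
whenever `‖y - z‖ < ε`. With `z = 0` this makes every `c > ‖a‖` feasible, i.e. `a - c • I e ∈ K`;
with `z` close to a point of `closure K` it shows that every value feasible for `closure K` is,
up to an arbitrary `ε > 0`, feasible for `K`. Finally the feasible set of `closure K` is closed
in `ℝ`, so when it is bounded below its infimum is attained.
-/

open NormedSpace

/-- Positivity in the dual of an ordered normed space: `η ≥ 0` iff `η f ≥ 0`
for every `f ≥ 0`. -/
def dualNonneg (X : Type*) [NormedAddCommGroup X] [NormedSpace ℝ X] [Lattice X]
    (η : StrongDual ℝ X) : Prop :=
  ∀ f : X, 0 ≤ f → 0 ≤ η f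

/-- Positivity in the bidual: `a ≥ 0` iff `a η ≥ 0` for every `η ≥ 0` in the dual. -/
def bidualNonneg (X : Type*) [NormedAddCommGroup X] [NormedSpace ℝ X] [Lattice X]
    (a : StrongDual ℝ (StrongDual ℝ X)) : Prop :=
  ∀ η : StrongDual ℝ X, dualNonneg X η → 0 ≤ a η

/-- The value of the dual problem `D(a; K)`, as an extended real number
(with `inf ∅ = +∞`). -/
noncomputable def Dval (X : Type*) [NormedAddCommGroup X] [NormedSpace ℝ X] [Lattice X]
    (e : X) (K : Set (StrongDual ℝ (StrongDual ℝ X))) (a : StrongDual ℝ (StrongDual ℝ X)) : EReal :=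
  sInf {x : EReal | ∃ c : ℝ, x = (c : EReal) ∧
    ∃ z ∈ K, c • (inclusionInDoubleDual ℝ X e) + z = a}

section

variable {X : Type*} [NormedAddCommGroup X] [NormedSpace ℝ X] {e : X}

def dualFeasible (e : X) (C : Set (StrongDual ℝ (StrongDual ℝ X)))
    (a : StrongDual ℝ (StrongDual ℝ X)) : Set ℝ :=
  {c | a - c • inclusionInDoubleDual ℝ X e ∈ C}

lemma mem_dualFeasible {C : Set (StrongDual ℝ (StrongDual ℝ X))}
    {a : StrongDual ℝ (StrongDual ℝ X)} {c : ℝ} :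
    c ∈ dualFeasible e C a ↔ a - c • inclusionInDoubleDual ℝ X e ∈ C :=
  Iff.rfl

variable [Lattice X]

lemma bidualNonneg_add {u v : StrongDual ℝ (StrongDual ℝ X)} (hu : bidualNonneg X u)
    (hv : bidualNonneg X v) : bidualNonneg X (u + v) :=
  fun η hη => add_nonneg (hu η hη) (hv η hη)

lemma bidualNonneg_smul_inclusionInDoubleDual (he : 0 ≤ e) {t : ℝ} (ht : 0 ≤ t) :
    bidualNonneg X (t • inclusionInDoubleDual ℝ X e) :=
  fun _ hη => mul_nonneg ht (hη e he)

def orderUnitBounds (e : X) (w : StrongDual ℝ (StrongDual ℝ X)) : Set ℝ :=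
  {c | bidualNonneg X (w + c • inclusionInDoubleDual ℝ X e) ∧
    bidualNonneg X (c • inclusionInDoubleDual ℝ X e - w)}

lemma bidualNonneg_smul_sub_of_norm_lt (he : 0 ≤ e) {w : StrongDual ℝ (StrongDual ℝ X)}
    (hw : ‖w‖ = sInf (orderUnitBounds e w)) {ε : ℝ} (hε : ‖w‖ < ε) :
    bidualNonneg X (ε • inclusionInDoubleDual ℝ X e - w) := by
  rcases (orderUnitBounds e w).eq_empty_or_nonempty with hS | hS
  · obtain rfl : w = 0 := (norm_eq_zero (E := StrongDual ℝ (StrongDual ℝ X))).1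
      (hw.trans (by rw [hS, Real.sInf_empty]))
    simpa using bidualNonneg_smul_inclusionInDoubleDual he
      ((norm_nonneg (0 : StrongDual ℝ (StrongDual ℝ X))).trans hε.le)
  · obtain ⟨s, hs, hsε⟩ := exists_lt_of_csInf_lt hS (hw ▸ hε)
    have hsplit : ε • inclusionInDoubleDual ℝ X e - w =
        (s • inclusionInDoubleDual ℝ X e - w) + (ε - s) • inclusionInDoubleDual ℝ X e := by
      module
    rw [hsplit]
    exact bidualNonneg_add hs.2 (bidualNonneg_smul_inclusionInDoubleDual he (by linarith))

variable {C C' : Set (StrongDual ℝ (StrongDual ℝ X))} {a : StrongDual ℝ (StrongDual ℝ X)}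

lemma Dval_eq_sInf_image_dualFeasible :
    Dval X e C a = sInf (Real.toEReal '' dualFeasible e C a) := by
  unfold Dval
  congr 1
  ext x
  constructor
  · rintro ⟨c, rfl, z, hz, rfl⟩
    exact ⟨c, show _ ∈ C by convert hz using 1; abel, rfl⟩
  · rintro ⟨c, hc, rfl⟩
    exact ⟨c, rfl, _, hc, by abel⟩

lemma Dval_le_coe_of_forall_lt {c : ℝ} (h : ∀ c' : ℝ, c < c' → c' ∈ dualFeasible e C a) :
    Dval X e C a ≤ c := by
  rw [Dval_eq_sInf_image_dualFeasible, ← EReal.le_of_forall_lt_iff_le]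
  intro c' hc'
  exact sInf_le ⟨c', h c' (EReal.coe_lt_coe_iff.1 hc'), rfl⟩

lemma Dval_anti (h : C ⊆ C') : Dval X e C' a ≤ Dval X e C a := by
  simp only [Dval_eq_sInf_image_dualFeasible]
  exact sInf_le_sInf (Set.image_mono fun c hc => h hc)

lemma exists_coe_eq_Dval (hC : IsClosed C) (hne : (dualFeasible e C a).Nonempty)
    (hbot : ⊥ < Dval X e C a) : ∃ d ∈ dualFeasible e C a, (d : EReal) = Dval X e C a := by
  rw [Dval_eq_sInf_image_dualFeasible] at hbot ⊢
  obtain ⟨r, -, hr⟩ := EReal.exists_between_coe_real hbot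
  have hbdd : BddBelow (dualFeasible e C a) :=
    ⟨r, fun c hc => EReal.coe_le_coe_iff.1 (hr.le.trans (sInf_le ⟨c, hc, rfl⟩))⟩
  have hcont : Continuous fun c : ℝ => a - c • inclusionInDoubleDual ℝ X e :=
    continuous_const.sub
      (continuous_id.smul (continuous_const (y := inclusionInDoubleDual ℝ X e)))
  have hclosed : IsClosed (dualFeasible e C a) := hC.preimage hcont
  exact ⟨_, hclosed.csInf_mem hne hbdd, Monotone.map_csInf_of_continuousAt
    (EReal.continuous_coe_iff.2 continuous_id).continuousAt EReal.coe_strictMono.monotone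
    hne hbdd⟩

variable {K : Set (StrongDual ℝ (StrongDual ℝ X))}

lemma sub_smul_mem_of_norm_sub_lt (he : 0 ≤ e)
    (hbnorm : ∀ w, ‖w‖ = sInf (orderUnitBounds e w))
    (hKmono : ∀ z ∈ K, ∀ n, bidualNonneg X (-n) → z + n ∈ K)
    {y z : StrongDual ℝ (StrongDual ℝ X)} (hz : z ∈ K) {ε : ℝ} (h : ‖y - z‖ < ε) :
    y - ε • inclusionInDoubleDual ℝ X e ∈ K := by
  have hn : bidualNonneg X (-(y - z - ε • inclusionInDoubleDual ℝ X e)) := by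
    convert bidualNonneg_smul_sub_of_norm_lt he (hbnorm _) h using 1
    abel
  convert hKmono z hz _ hn using 1
  abel

lemma mem_dualFeasible_of_norm_lt (he : 0 ≤ e)
    (hbnorm : ∀ w, ‖w‖ = sInf (orderUnitBounds e w))
    (hK0 : (0 : StrongDual ℝ (StrongDual ℝ X)) ∈ K)
    (hKmono : ∀ z ∈ K, ∀ n, bidualNonneg X (-n) → z + n ∈ K)
    {c : ℝ} (hc : ‖a‖ < c) : c ∈ dualFeasible e K a :=
  sub_smul_mem_of_norm_sub_lt he hbnorm hKmono hK0 (by convert hc using 2; abel)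

lemma mem_dualFeasible_of_mem_closure_of_lt (he : 0 ≤ e)
    (hbnorm : ∀ w, ‖w‖ = sInf (orderUnitBounds e w))
    (hKmono : ∀ z ∈ K, ∀ n, bidualNonneg X (-n) → z + n ∈ K)
    {c c' : ℝ} (hc : c ∈ dualFeasible e (closure K) a) (hcc' : c < c') :
    c' ∈ dualFeasible e K a := by
  obtain ⟨z, hz, hdist⟩ :=
    Metric.mem_closure_iff.1 (mem_dualFeasible.1 hc) (c' - c) (sub_pos.2 hcc')
  have hmem := sub_smul_mem_of_norm_sub_lt he hbnorm hKmono hz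
    (dist_eq_norm (E := StrongDual ℝ (StrongDual ℝ X)) _ _ ▸ hdist)
  rw [mem_dualFeasible]
  convert hmem using 1
  module

lemma Dval_closure_eq (he : 0 ≤ e)
    (hbnorm : ∀ w, ‖w‖ = sInf (orderUnitBounds e w))
    (hKmono : ∀ z ∈ K, ∀ n, bidualNonneg X (-n) → z + n ∈ K) :
    Dval X e (closure K) a = Dval X e K a := by
  refine le_antisymm (Dval_anti subset_closure) ?_
  rw [Dval_eq_sInf_image_dualFeasible (C := closure K)]
  refine le_sInf ?_
  rintro _ ⟨c, hc, rfl⟩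
  exact Dval_le_coe_of_forall_lt fun _ =>
    mem_dualFeasible_of_mem_closure_of_lt he hbnorm hKmono hc

end

theorem stmt0_general
    (X : Type*) [NormedAddCommGroup X] [Lattice X] [NormedSpace ℝ X]
    -- `e` is a positive order unit inducing the lattice norm of the AM-space `X`
    (e : X) (he : 0 ≤ e)
    -- the corresponding formula for the bidual norm
    (hbnorm : ∀ a : StrongDual ℝ (StrongDual ℝ X), ‖a‖ = sInf {c : ℝ |
      bidualNonneg X (a + c • inclusionInDoubleDual ℝ X e) ∧
      bidualNonneg X (c • inclusionInDoubleDual ℝ X e - a)})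
    -- `K` is a cone containing `0`
    (K : Set (StrongDual ℝ (StrongDual ℝ X)))
    (hK0 : (0 : StrongDual ℝ (StrongDual ℝ X)) ∈ K)
    -- `K` is stable under addition of nonpositive elements of the bidual
    (hKmono : ∀ z ∈ K, ∀ n : StrongDual ℝ (StrongDual ℝ X), bidualNonneg X (-n) → z + n ∈ K)
    (a : StrongDual ℝ (StrongDual ℝ X)) :
    Dval X e K a = Dval X e (closure K) a ∧
    Dval X e K a ≤ ((‖a‖ : ℝ) : EReal) ∧
    (⊥ < Dval X e K a →
      ∃ za ∈ closure K, ∃ d : ℝ, (d : EReal) = Dval X e (closure K) a ∧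
        a = za + d • inclusionInDoubleDual ℝ X e) := by
  have hclosure := Dval_closure_eq he hbnorm hKmono (a := a)
  have hfeasible : ‖a‖ + 1 ∈ dualFeasible e K a :=
    mem_dualFeasible_of_norm_lt he hbnorm hK0 hKmono (lt_add_one _)
  refine ⟨hclosure.symm, Dval_le_coe_of_forall_lt fun _ =>
    mem_dualFeasible_of_norm_lt he hbnorm hK0 hKmono, fun hbot => ?_⟩
  obtain ⟨d, hd, hdD⟩ := exists_coe_eq_Dval isClosed_closure ⟨_, subset_closure hfeasible⟩
    (hclosure ▸ hbot)
  exact ⟨_, hd, d, hdD, by abel⟩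

theorem stmt0
    (X : Type*) [NormedAddCommGroup X] [Lattice X] [IsOrderedAddMonoid X] [HasSolidNorm X] [NormedSpace ℝ X] [CompleteSpace X]
    -- `e` is a positive order unit inducing the lattice norm of the AM-space `X`
    (e : X) (he : 0 ≤ e)
    (hnorm : ∀ f : X, ‖f‖ = sInf {c : ℝ | -(c • e) ≤ f ∧ f ≤ c • e})
    -- the corresponding formula for the bidual norm
    (hbnorm : ∀ a : StrongDual ℝ (StrongDual ℝ X), ‖a‖ = sInf {c : ℝ |
      bidualNonneg X (a + c • inclusionInDoubleDual ℝ X e) ∧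
      bidualNonneg X (c • inclusionInDoubleDual ℝ X e - a)})
    -- `K` is a cone containing `0`
    (K : Set (StrongDual ℝ (StrongDual ℝ X)))
    (hK0 : (0 : StrongDual ℝ (StrongDual ℝ X)) ∈ K)
    (hKcone : ∀ z ∈ K, ∀ t : ℝ, 0 ≤ t → t • z ∈ K)
    -- `K` is stable under addition of nonpositive elements of the bidual
    (hKmono : ∀ z ∈ K, ∀ n : StrongDual ℝ (StrongDual ℝ X), bidualNonneg X (-n) → z + n ∈ K)
    (a : StrongDual ℝ (StrongDual ℝ X)) :
    Dval X e K a = Dval X e (closure K) a ∧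
    Dval X e K a ≤ ((‖a‖ : ℝ) : EReal) ∧
    (⊥ < Dval X e K a →
      ∃ za ∈ closure K, ∃ d : ℝ, (d : EReal) = Dval X e (closure K) a ∧
        a = za + d • inclusionInDoubleDual ℝ X e) :=
  stmt0_general X e he hbnorm K hK0 hKmono a
end

section
/- Under the standing assumption on Q, the weak* closure of I(H_Q) + X′′_− and the weak* closure of 𝔥_Q + X′′_− are both equal to K_Q. -/
open NormedSpace Pointwise

/-- The weak* closure of a subset of the bidual `X′′ = (X′)′`. -/
noncomputable def wstarClosure (X : Type*) [NormedAddCommGroup X] [NormedSpace ℝ X]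
    (S : Set (StrongDual ℝ (StrongDual ℝ X))) : Set (StrongDual ℝ (StrongDual ℝ X)) :=
  StrongDual.toWeakDual ⁻¹' closure (StrongDual.toWeakDual '' S)

/-!
Since `I(H) + X′′₋ ⊆ 𝔥_Q + X′′₋ ⊆ K_Q` and `K_Q` is weak* closed, it suffices to put `K_Q`
inside the weak* closure of `I(H) + X′′₋`. If `z ∈ K_Q` were outside, Hahn–Banach in the
weak* topology would give `η ∈ X′` and `u` with `a η < u < z η` for all `a ∈ I(H) + X′′₋`.
Bounded above on the subspace `I(H)` and on the cone `X′′₋`, `η` vanishes on `H` and is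
positive; since `e` is an order unit, `η` is either `0` or a positive multiple of an element
of `Q`. Either way `z η ≤ 0`, whereas `0 < u < z η` because `0 ∈ I(H) + X′′₋`.
-/

lemma nonpos_of_forall_nonneg_mul_lt {r u : ℝ} (h : ∀ t : ℝ, 0 ≤ t → t * r < u) :
    r ≤ 0 := by
  by_contra! hr
  have hlt := h ((|u| + 1) / r) (by positivity)
  rw [div_mul_cancel₀ _ hr.ne'] at hlt
  linarith [le_abs_self u]

lemma exists_smul_bound_of_norm_eq_sInf {X : Type*} [NormedAddCommGroup X] [Preorder X]
    [Module ℝ X] {e : X}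
    (hnorm : ∀ f : X, ‖f‖ = sInf {c : ℝ | -(c • e) ≤ f ∧ f ≤ c • e}) (f : X) :
    ∃ c : ℝ, -(c • e) ≤ f ∧ f ≤ c • e := by
  by_contra! h
  -- otherwise `‖f‖ = sInf ∅ = 0`, so `f = 0`, which is bounded by `0 • e`
  have hempty : {c : ℝ | -(c • e) ≤ f ∧ f ≤ c • e} = ∅ :=
    Set.eq_empty_of_forall_notMem fun c hc => h c hc.1 hc.2
  have hf : f = 0 := by rw [← norm_eq_zero, hnorm, hempty, Real.sInf_empty]
  exact h 0 (by simp [hf]) (by simp [hf])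

section Dual

variable {X : Type*} [NormedAddCommGroup X] [NormedSpace ℝ X]

lemma subset_wstarClosure (S : Set (StrongDual ℝ (StrongDual ℝ X))) : S ⊆ wstarClosure X S :=
  fun a ha => show StrongDual.toWeakDual a ∈ closure (StrongDual.toWeakDual '' S) from
    subset_closure (Set.mem_image_of_mem _ ha)

lemma wstarClosure_mono {S T : Set (StrongDual ℝ (StrongDual ℝ X))} (h : S ⊆ T) :
    wstarClosure X S ⊆ wstarClosure X T :=
  Set.preimage_mono (closure_mono (Set.image_mono h))

lemma wstarClosure_subset_setOf_forall_apply_nonpos {Q : Set (StrongDual ℝ X)}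
    {S : Set (StrongDual ℝ (StrongDual ℝ X))} (hS : S ⊆ {z | ∀ η ∈ Q, z η ≤ 0}) :
    wstarClosure X S ⊆ {z | ∀ η ∈ Q, z η ≤ 0} := by
  have hclosed : IsClosed {w : WeakDual ℝ (StrongDual ℝ X) | ∀ η ∈ Q, w η ≤ 0} := by
    simp only [Set.ofPred_forall]
    exact isClosed_biInter fun η _ => isClosed_le (WeakDual.eval_continuous η) continuous_const
  exact fun z hz => closure_minimal (Set.image_subset_iff.2 hS) hclosed hz

/-- Hahn–Banach in the weak* topology, whose continuous functionals are evaluations at `X′`. -/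
lemma exists_forall_apply_lt_of_notMem_wstarClosure {S : Set (StrongDual ℝ (StrongDual ℝ X))}
    (hS : Convex ℝ S) {z : StrongDual ℝ (StrongDual ℝ X)} (hz : z ∉ wstarClosure X S) :
    ∃ η : StrongDual ℝ X, ∃ u : ℝ, (∀ a ∈ S, a η < u) ∧ u < z η := by
  have hconv : Convex ℝ (closure (StrongDual.toWeakDual '' S)) :=
    Convex.closure (E := WeakDual ℝ (StrongDual ℝ X))
      (hS.linear_image (StrongDual.toWeakDual (𝕜 := ℝ) (E := StrongDual ℝ X)).toLinearMap)
  have : LocallyConvexSpace ℝ (WeakDual ℝ (StrongDual ℝ X)) := by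
    exact WeakBilin.locallyConvexSpace (𝕜 := ℝ) (E := StrongDual ℝ (StrongDual ℝ X))
      (F := StrongDual ℝ X) (B := topDualPairing ℝ (StrongDual ℝ X))
  have hz' : StrongDual.toWeakDual z ∉ closure (StrongDual.toWeakDual '' S) := hz
  obtain ⟨φ, u, hφS, hφz⟩ := geometric_hahn_banach_closed_point hconv isClosed_closure hz'
  obtain ⟨η, rfl⟩ := LinearMap.dualEmbedding_surjective (𝕜 := ℝ) (topDualPairing ℝ _) φ
  exact ⟨η, u, fun a ha => hφS _ (subset_wstarClosure S ha), hφz⟩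

lemma image_inclusionInDoubleDual_subset_annihilator (H : Submodule ℝ X) :
    inclusionInDoubleDual ℝ X '' (H : Set X) ⊆
      {a | ∀ η : StrongDual ℝ X, (∀ h ∈ H, η h = 0) → a η = 0} := by
  rintro _ ⟨g, hg, rfl⟩ η hη
  exact hη g hg

lemma forall_apply_eq_zero_of_forall_apply_lt {H : Submodule ℝ X} {η : StrongDual ℝ X}
    {u : ℝ} (hu : ∀ g ∈ H, η g < u) : ∀ g ∈ H, η g = 0 := by
  have hbound (g) (hg : g ∈ H) : η g ≤ 0 :=
    nonpos_of_forall_nonneg_mul_lt fun t _ => by simpa using hu _ (H.smul_mem t hg)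
  intro g hg
  exact le_antisymm (hbound g hg) (by simpa using hbound (-g) (H.neg_mem hg))

end Dual

section Ordered

variable {X : Type*} [NormedAddCommGroup X] [Lattice X] [NormedSpace ℝ X]

lemma zero_mem_setOf_bidualNonneg_neg :
    (0 : StrongDual ℝ (StrongDual ℝ X)) ∈ {a | bidualNonneg X (-a)} :=
  fun η _ => by simp

lemma convex_setOf_bidualNonneg_neg :
    Convex ℝ {a : StrongDual ℝ (StrongDual ℝ X) | bidualNonneg X (-a)} := by
  intro a ha b hb s t hs ht _ η hη
  have hab : (-(s • a + t • b)) η = s * (-a) η + t * (-b) η := by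
    simp only [neg_apply, add_apply, smul_apply, smul_eq_mul]; ring
  rw [hab]
  exact add_nonneg (mul_nonneg hs (ha η hη)) (mul_nonneg ht (hb η hη))

lemma annihilator_add_subset_setOf_forall_apply_nonpos {H : Submodule ℝ X}
    {Q : Set (StrongDual ℝ X)} (hQ : ∀ η ∈ Q, (∀ h ∈ H, η h = 0) ∧ dualNonneg X η) :
    {a : StrongDual ℝ (StrongDual ℝ X) |
        ∀ η : StrongDual ℝ X, (∀ h ∈ H, η h = 0) → a η = 0} + {a | bidualNonneg X (-a)} ⊆
      {z | ∀ η ∈ Q, z η ≤ 0} := by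
  rintro _ ⟨a, ha, b, hb, rfl⟩ η hη
  have hbη : 0 ≤ -b η := hb η (hQ η hη).2
  rw [add_apply, ha η (hQ η hη).1]
  linarith

lemma dualNonneg_of_forall_apply_lt {η : StrongDual ℝ X} {u : ℝ}
    (hu : ∀ a : StrongDual ℝ (StrongDual ℝ X), bidualNonneg X (-a) → a η < u) :
    dualNonneg X η := by
  intro f hf
  have hmem (t : ℝ) (ht : 0 ≤ t) : bidualNonneg X (-(-(t • inclusionInDoubleDual ℝ X f))) :=
    fun μ hμ => by simpa using mul_nonneg ht (hμ f hf)
  have hneg := nonpos_of_forall_nonneg_mul_lt (r := -η f) fun t ht => by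
    simpa using hu _ (hmem t ht)
  linarith

variable [IsOrderedAddMonoid X]

lemma eq_zero_of_dualNonneg_of_apply_eq_zero {e : X}
    (hunit : ∀ f : X, ∃ c : ℝ, -(c • e) ≤ f ∧ f ≤ c • e) {η : StrongDual ℝ X}
    (hη : dualNonneg X η) (he : η e = 0) : η = 0 := by
  ext f
  obtain ⟨c, hlo, hhi⟩ := hunit f
  have h₁ : 0 ≤ η (c • e - f) := hη _ (sub_nonneg.2 hhi)
  have h₂ : 0 ≤ η (f + c • e) := hη _ (neg_le_iff_add_nonneg.1 hlo)
  simp only [map_sub, map_add, map_smul, smul_eq_mul, he, mul_zero] at h₁ h₂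
  simp only [zero_apply]
  linarith

lemma apply_nonpos_of_forall_mem_apply_nonpos {e : X} (he : 0 ≤ e)
    (hunit : ∀ f : X, ∃ c : ℝ, -(c • e) ≤ f ∧ f ≤ c • e) {H : Submodule ℝ X}
    {Q : Set (StrongDual ℝ X)}
    (hQ : {η : StrongDual ℝ X | ∀ h ∈ H, η h = 0} ∩
      {η : StrongDual ℝ X | dualNonneg X η ∧ η e = 1} ⊆ Q)
    {z : StrongDual ℝ (StrongDual ℝ X)} (hz : ∀ η ∈ Q, z η ≤ 0)
    {η : StrongDual ℝ X} (hηH : ∀ h ∈ H, η h = 0) (hη : dualNonneg X η) :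
    z η ≤ 0 := by
  rcases (hη e he).eq_or_lt with he0 | he0
  · simp [eq_zero_of_dualNonneg_of_apply_eq_zero hunit hη he0.symm]
  · have hmem : (η e)⁻¹ • η ∈ Q := hQ
      ⟨fun h hh => by simp [hηH h hh],
        fun f hf => mul_nonneg (inv_nonneg.2 he0.le) (hη f hf), inv_mul_cancel₀ he0.ne'⟩
    have hzη := hz _ hmem
    rw [map_smul, smul_eq_mul] at hzη
    exact nonpos_of_mul_nonpos_right hzη (inv_pos.2 he0)

lemma setOf_forall_apply_nonpos_subset_wstarClosure {e : X} (he : 0 ≤ e)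
    (hunit : ∀ f : X, ∃ c : ℝ, -(c • e) ≤ f ∧ f ≤ c • e) {H : Submodule ℝ X}
    {Q : Set (StrongDual ℝ X)}
    (hQ : {η : StrongDual ℝ X | ∀ h ∈ H, η h = 0} ∩
      {η : StrongDual ℝ X | dualNonneg X η ∧ η e = 1} ⊆ Q) :
    {z | ∀ η ∈ Q, z η ≤ 0} ⊆
      wstarClosure X (inclusionInDoubleDual ℝ X '' (H : Set X) + {a | bidualNonneg X (-a)}) := by
  intro z hz
  by_contra hzS
  have hconv := (H.convex.linear_image (inclusionInDoubleDual ℝ X).toLinearMap).add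
    (convex_setOf_bidualNonneg_neg (X := X))
  obtain ⟨η, u, hηS, hηz⟩ := exists_forall_apply_lt_of_notMem_wstarClosure hconv hzS
  have hH0 : (0 : StrongDual ℝ (StrongDual ℝ X)) ∈
      inclusionInDoubleDual ℝ X '' (H : Set X) :=
    ⟨0, H.zero_mem, map_zero _⟩
  have hu : 0 < u := by
    simpa using hηS 0 (Set.subset_add_left _ zero_mem_setOf_bidualNonneg_neg hH0)
  have hηH : ∀ g ∈ H, η g = 0 := forall_apply_eq_zero_of_forall_apply_lt fun g hg =>
    hηS _ (Set.subset_add_left _ zero_mem_setOf_bidualNonneg_neg ⟨g, hg, rfl⟩)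
  have hη : dualNonneg X η := dualNonneg_of_forall_apply_lt fun a ha =>
    hηS a (Set.subset_add_right _ hH0 ha)
  linarith [apply_nonpos_of_forall_mem_apply_nonpos he hunit hQ hz hηH hη]

end Ordered

theorem stmt1_general
    (X : Type*) [NormedAddCommGroup X] [Lattice X] [IsOrderedAddMonoid X] [NormedSpace ℝ X]
    -- `e` is a positive order unit inducing the lattice norm of the AM-space `X`
    (e : X) (he : 0 ≤ e)
    (hnorm : ∀ f : X, ‖f‖ = sInf {c : ℝ | -(c • e) ≤ f ∧ f ≤ c • e})
    -- standing assumption on `Q`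
    (H : Submodule ℝ X)
    (Q : Set (StrongDual ℝ X))
    (hQ : Q = {η : StrongDual ℝ X | ∀ h ∈ H, η h = 0} ∩
      {η : StrongDual ℝ X | dualNonneg X η ∧ η e = 1}) :
    wstarClosure X ((inclusionInDoubleDual ℝ X '' (H : Set X)) +
        {a : StrongDual ℝ (StrongDual ℝ X) | bidualNonneg X (-a)}) =
      {z : StrongDual ℝ (StrongDual ℝ X) | ∀ η ∈ Q, z η ≤ 0} ∧
    wstarClosure X (({a : StrongDual ℝ (StrongDual ℝ X) |
          ∀ η : StrongDual ℝ X, (∀ h ∈ H, η h = 0) → a η = 0}) +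
        {a : StrongDual ℝ (StrongDual ℝ X) | bidualNonneg X (-a)}) =
      {z : StrongDual ℝ (StrongDual ℝ X) | ∀ η ∈ Q, z η ≤ 0} := by
  have hsub := Set.add_subset_add_right (t := {a | bidualNonneg X (-a)})
    (image_inclusionInDoubleDual_subset_annihilator H)
  have hK := annihilator_add_subset_setOf_forall_apply_nonpos (Q := Q) fun η hη =>
    ⟨(hQ ▸ hη).1, (hQ ▸ hη).2.1⟩
  have hclosure := setOf_forall_apply_nonpos_subset_wstarClosure he
    (exists_smul_bound_of_norm_eq_sInf hnorm) hQ.ge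
  exact ⟨(wstarClosure_subset_setOf_forall_apply_nonpos (hsub.trans hK)).antisymm hclosure,
    (wstarClosure_subset_setOf_forall_apply_nonpos hK).antisymm
      (hclosure.trans (wstarClosure_mono hsub))⟩

theorem stmt1
    (X : Type*) [NormedAddCommGroup X] [Lattice X] [HasSolidNorm X] [IsOrderedAddMonoid X] [NormedSpace ℝ X] [CompleteSpace X]
    -- `e` is a positive order unit inducing the lattice norm of the AM-space `X`
    (e : X) (he : 0 ≤ e)
    (hnorm : ∀ f : X, ‖f‖ = sInf {c : ℝ | -(c • e) ≤ f ∧ f ≤ c • e})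
    -- standing assumption on `Q`
    (H : Submodule ℝ X) (hH : IsClosed (H : Set X))
    (Q : Set (StrongDual ℝ X)) (hQne : Q.Nonempty) (hQcl : IsClosed Q) (hQconv : Convex ℝ Q)
    (hQ : Q = {η : StrongDual ℝ X | ∀ h ∈ H, η h = 0} ∩
      {η : StrongDual ℝ X | dualNonneg X η ∧ η e = 1}) :
    wstarClosure X ((inclusionInDoubleDual ℝ X '' (H : Set X)) +
        {a : StrongDual ℝ (StrongDual ℝ X) | bidualNonneg X (-a)}) =
      {z : StrongDual ℝ (StrongDual ℝ X) | ∀ η ∈ Q, z η ≤ 0} ∧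
    wstarClosure X (({a : StrongDual ℝ (StrongDual ℝ X) |
          ∀ η : StrongDual ℝ X, (∀ h ∈ H, η h = 0) → a η = 0}) +
        {a : StrongDual ℝ (StrongDual ℝ X) | bidualNonneg X (-a)}) =
      {z : StrongDual ℝ (StrongDual ℝ X) | ∀ η ∈ Q, z η ≤ 0} :=
  stmt1_general X e he hnorm H Q hQ
end

section
/- For every f ∈ X, sup_{η∈Q} η(f) = inf{c ∈ ℝ : ∃ h ∈ H_Q such that c•e + h ≥ f}. -/
open NormedSpace

/-!
Weak duality is immediate: if `η ∈ Q` and `f ≤ c • e + h` with `h ∈ H`, then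
`η f ≤ c η e + η h = c`. For the converse, let `c` be below the infimum. Since `e` is an order
unit inducing the norm, every element of norm `< ε` lies above `-ε • e`; hence `c • e - f` is not
in the closed convex cone `closure (X₊ + H)`, `X₊` the positive cone, for otherwise `c + ε` would
be admissible. Farkas' lemma separates it by a functional that is nonnegative on `X₊` and on `± H`;
it is strictly positive at `e`, and normalising it at `e` gives an element of `Q` with value
`> c` at `f`. Convexity of `X₊` itself comes from the lattice: `0 ≤ 2 • x → 0 ≤ x` makes dyadic
multiples of positive elements positive, and the positive cone is closed.
-/

open Filter Topology Pointwise

lemma nonneg_of_two_pow_nsmul_nonneg {α : Type*} [Lattice α] [AddCommGroup α]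
    [IsOrderedAddMonoid α] {x : α} (k : ℕ) (h : 0 ≤ 2 ^ k • x) : 0 ≤ x := by
  induction k generalizing x with
  | zero => simpa using h
  | succ k ih => exact nsmul_two_semiclosed (ih (by rwa [← mul_nsmul', ← pow_succ]))

section ClosedPositiveCone
variable {X : Type*} [Lattice X] [AddCommGroup X] [IsOrderedAddMonoid X] [Module ℝ X]
  [TopologicalSpace X] [ClosedIciTopology X] [ContinuousSMul ℝ X]

lemma smul_nonneg_of_closedIciTopology {t : ℝ} (ht : 0 ≤ t) {x : X} (hx : 0 ≤ x) :
    0 ≤ t • x := by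
  have hdyadic (k : ℕ) : 0 ≤ ((⌊t * 2 ^ k⌋₊ : ℝ) / 2 ^ k) • x := by
    refine nonneg_of_two_pow_nsmul_nonneg k ?_
    rw [← Nat.cast_smul_eq_nsmul ℝ, smul_smul, Nat.cast_pow, Nat.cast_ofNat,
      mul_div_cancel₀ _ (by positivity), Nat.cast_smul_eq_nsmul]
    exact nsmul_nonneg hx _
  have hlim : Tendsto (fun k : ℕ ↦ ((⌊t * 2 ^ k⌋₊ : ℝ) / 2 ^ k) • x) atTop (𝓝 (t • x)) :=
    ((tendsto_nat_floor_mul_div_atTop ht).comp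
      (tendsto_pow_atTop_atTop_of_one_lt one_lt_two)).smul_const x
  exact isClosed_Ici.mem_of_tendsto hlim (Eventually.of_forall hdyadic)

instance : IsOrderedModule ℝ X :=
  .of_smul_nonneg fun _ ht _ hx ↦ smul_nonneg_of_closedIciTopology ht hx

end ClosedPositiveCone

section AMSpace
variable {X : Type*} [NormedAddCommGroup X] [Lattice X] [IsOrderedAddMonoid X] [NormedSpace ℝ X]
  {e : X}

lemma apply_le_of_le_smul_add {H : Submodule ℝ X} {η : StrongDual ℝ X} (hηH : ∀ h ∈ H, η h = 0)
    (hη : dualNonneg X η) (hηe : η e = 1) {f h : X} {c : ℝ} (hh : h ∈ H)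
    (hf : f ≤ c • e + h) : η f ≤ c := by
  have := hη _ (sub_nonneg.2 hf)
  rw [map_sub, map_add, map_smul, hηe, hηH h hh, smul_eq_mul, mul_one, add_zero] at this
  linarith

variable [HasSolidNorm X] (he : 0 ≤ e)
  (hnorm : ∀ f : X, ‖f‖ = sInf {c : ℝ | -(c • e) ≤ f ∧ f ≤ c • e})
include he hnorm

lemma neg_smul_le_of_norm_lt {x : X} {c : ℝ} (hx : ‖x‖ < c) : -(c • e) ≤ x := by
  rcases Set.eq_empty_or_nonempty {c : ℝ | -(c • e) ≤ x ∧ x ≤ c • e} with hT | hT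
  · obtain rfl : x = 0 := norm_eq_zero.1 (by rw [hnorm, hT, Real.sInf_empty])
    exact neg_nonpos.2 (smul_nonneg ((norm_nonneg _).trans_lt hx).le he)
  · obtain ⟨d, hd, hdc⟩ := exists_lt_of_csInf_lt hT (hnorm x ▸ hx)
    exact (neg_le_neg (smul_le_smul_of_nonneg_right hdc.le he)).trans hd.1

lemma exists_le_smul_add_of_mem_closure {H : Submodule ℝ X} {f : X} {c ε : ℝ} (hε : 0 < ε)
    (hc : c • e - f ∈ closure (Set.Ici (0 : X) + (H : Set X))) : ∃ h ∈ H, f ≤ (c + ε) • e + h := by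
  obtain ⟨_, ⟨k, hk, h, hh, rfl⟩, hdist⟩ := Metric.mem_closure_iff.1 hc ε hε
  have : -(ε • e) ≤ c • e - f - (k + h) := neg_smul_le_of_norm_lt he hnorm (by rwa [← dist_eq_norm])
  refine ⟨-h, H.neg_mem hh, ?_⟩
  calc f ≤ f + k := le_add_of_nonneg_right hk
    _ ≤ (c + ε) • e + -h := sub_nonneg.1 (by convert sub_nonneg.2 this using 1; rw [add_smul]; abel)

lemma exists_dual_lt_of_notMem_closure {H : Submodule ℝ X} {f : X} {c : ℝ}
    (hc : c • e - f ∉ closure (Set.Ici (0 : X) + (H : Set X))) :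
    ∃ η : StrongDual ℝ X, (∀ h ∈ H, η h = 0) ∧ dualNonneg X η ∧ η e = 1 ∧ c < η f := by
  let C : ProperCone ℝ X := Submodule.closure (PointedCone.positive ℝ X ⊔ (H : PointedCone ℝ X))
  have hC : (C : Set X) = closure (Set.Ici (0 : X) + (H : Set X)) := by
    simp [C, Submodule.coe_closure, Submodule.coe_sup]
  obtain ⟨y, hyC, hy⟩ := C.hyperplane_separation_point (by rwa [← SetLike.mem_coe, hC])
  have hmemC {x : X} (hx : x ∈ Set.Ici (0 : X) + (H : Set X)) : 0 ≤ y x :=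
    hyC x (by rw [← SetLike.mem_coe, hC]; exact subset_closure hx)
  have hyH (h : X) (hh : h ∈ H) : y h = 0 := by
    have h₁ := hmemC ⟨0, le_rfl, h, hh, zero_add h⟩
    have h₂ := hmemC ⟨0, le_rfl, -h, H.neg_mem hh, zero_add (-h)⟩
    rw [map_neg] at h₂
    linarith
  have hypos : dualNonneg X y := fun x hx ↦ hmemC ⟨x, hx, 0, H.zero_mem, add_zero x⟩
  -- `e` is an order unit, so `y e = 0` would make `y` nonnegative everywhere.
  have hye : 0 < y e := by
    refine (hypos e he).lt_of_ne fun hye ↦ hy.not_ge ?_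
    have := hypos _ (neg_le_iff_add_nonneg.1
      (neg_smul_le_of_norm_lt he hnorm (lt_add_one ‖c • e - f‖)))
    rwa [map_add, map_smul, ← hye, smul_zero, add_zero] at this
  refine ⟨(y e)⁻¹ • y, fun h hh ↦ by simp [hyH h hh], fun x hx ↦ ?_, inv_mul_cancel₀ hye.ne', ?_⟩
  · exact mul_nonneg (inv_nonneg.2 hye.le) (hypos x hx)
  · rw [map_sub, map_smul, smul_eq_mul, sub_neg] at hy
    rw [smul_apply, smul_eq_mul, inv_mul_eq_div, lt_div_iff₀ hye]
    exact hy

end AMSpace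

theorem stmt3_general
    (X : Type*) [NormedAddCommGroup X] [Lattice X] [IsOrderedAddMonoid X] [HasSolidNorm X] [NormedSpace ℝ X]
    -- `e` is a positive order unit inducing the lattice norm of the AM-space `X`
    (e : X) (he : 0 ≤ e)
    (hnorm : ∀ f : X, ‖f‖ = sInf {c : ℝ | -(c • e) ≤ f ∧ f ≤ c • e})
    -- standing assumption on `Q`
    (H : Submodule ℝ X)
    (Q : Set (StrongDual ℝ X))
    (hQ : Q = {η : StrongDual ℝ X | ∀ h ∈ H, η h = 0} ∩
      {η : StrongDual ℝ X | dualNonneg X η ∧ η e = 1})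
    (f : X) :
    sSup {x : EReal | ∃ η ∈ Q, x = ((η f : ℝ) : EReal)} =
      sInf {x : EReal | ∃ c : ℝ, x = (c : EReal) ∧ ∃ h ∈ H, f ≤ c • e + h} := by
  subst hQ
  apply le_antisymm
  · refine sSup_le ?_
    rintro _ ⟨η, ⟨hηH, hη, hηe⟩, rfl⟩
    refine le_sInf ?_
    rintro _ ⟨c, rfl, h, hh, hf⟩
    exact EReal.coe_le_coe_iff.2 (apply_le_of_le_smul_add hηH hη hηe hh hf)
  · refine EReal.ge_of_forall_gt_iff_ge.1 fun c hc ↦ ?_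
    obtain ⟨d, hcd, hd⟩ := EReal.exists_between_coe_real hc
    have hsep : c • e - f ∉ closure (Set.Ici (0 : X) + (H : Set X)) := fun hmem ↦ by
      obtain ⟨h, hh, hf⟩ := exists_le_smul_add_of_mem_closure he hnorm
        (sub_pos.2 (EReal.coe_lt_coe_iff.1 hcd)) hmem
      rw [add_sub_cancel] at hf
      exact hd.not_ge (sInf_le ⟨d, rfl, h, hh, hf⟩)
    obtain ⟨η, hηH, hη, hηe, hηf⟩ := exists_dual_lt_of_notMem_closure he hnorm hsep
    exact le_sSup_of_le ⟨η, ⟨hηH, hη, hηe⟩, rfl⟩ (EReal.coe_le_coe_iff.2 hηf.le)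

theorem stmt3
    (X : Type*) [NormedAddCommGroup X] [Lattice X] [IsOrderedAddMonoid X] [HasSolidNorm X] [NormedSpace ℝ X] [CompleteSpace X]
    -- `e` is a positive order unit inducing the lattice norm of the AM-space `X`
    (e : X) (he : 0 ≤ e)
    (hnorm : ∀ f : X, ‖f‖ = sInf {c : ℝ | -(c • e) ≤ f ∧ f ≤ c • e})
    -- standing assumption on `Q`
    (H : Submodule ℝ X) (hH : IsClosed (H : Set X))
    (Q : Set (StrongDual ℝ X)) (hQne : Q.Nonempty) (hQcl : IsClosed Q) (hQconv : Convex ℝ Q)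
    (hQ : Q = {η : StrongDual ℝ X | ∀ h ∈ H, η h = 0} ∩
      {η : StrongDual ℝ X | dualNonneg X η ∧ η e = 1})
    (f : X) :
    sSup {x : EReal | ∃ η ∈ Q, x = ((η f : ℝ) : EReal)} =
      sInf {x : EReal | ∃ c : ℝ, x = (c : EReal) ∧ ∃ h ∈ H, f ≤ c • e + h} :=
  stmt3_general X e he hnorm H Q hQ f
end

section
/- For every bounded continuous function γ : ℝ^d → ℝ^d one has sup_{x ∈ ℝ^d} |γ(x)| ≤ sup_{(x,y) ∈ ℝ^d × ℝ^d} |γ(x)·(x − y)| / (2 + |x| + |y|), where γ(x)·(x − y) denotes the Euclidean inner product and |·| the Euclidean norm. -/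
/-!
Testing `T(γ)` at `y = x - t γ(x)` gives `⟪γ x, x - y⟫ = t ‖γ x‖²` while the weight
`2 + ‖x‖ + ‖y‖` grows at most like `t ‖γ x‖`, so the ratio tends to `‖γ x‖` as `t → ∞`.
-/

open RealInnerProductSpace Set

variable {E : Type*} [NormedAddCommGroup E] [InnerProductSpace ℝ E]

theorem bddAbove_range_abs_inner_sub_div {γ : E → E} {M : ℝ} (hM : ∀ x, ‖γ x‖ ≤ M) :
    BddAbove (range fun p : E × E => |⟪γ p.1, p.1 - p.2⟫| / (2 + ‖p.1‖ + ‖p.2‖)) := by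
  refine ⟨M, forall_mem_range.2 fun p => ?_⟩
  have hM₀ : 0 ≤ M := (norm_nonneg _).trans (hM 0)
  rw [div_le_iff₀ (by positivity)]
  calc |⟪γ p.1, p.1 - p.2⟫| ≤ ‖γ p.1‖ * ‖p.1 - p.2‖ := abs_real_inner_le_norm _ _
    _ ≤ M * (2 + ‖p.1‖ + ‖p.2‖) := by
      gcongr
      · exact hM p.1
      · linarith [norm_sub_le p.1 p.2]

theorem le_mul_sq_div_add_div {a c t D : ℝ} (ha : 0 ≤ a) (hc : 0 < c) (ht : 0 < t)
    (hD : 0 < D) (hDle : D ≤ c + t * a) : a ≤ t * a ^ 2 / D + c / t := by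
  calc a ≤ t * a ^ 2 / (c + t * a) + c / t := by
        rw [div_add_div _ _ (by positivity) ht.ne', le_div_iff₀ (by positivity)]
        nlinarith [sq_nonneg c]
    _ ≤ t * a ^ 2 / D + c / t := by gcongr

theorem norm_le_abs_inner_sub_div_add (γ : E → E) (x : E) {t : ℝ} (ht : 0 < t) :
    ‖γ x‖ ≤ |⟪γ x, x - (x - t • γ x)⟫| / (2 + ‖x‖ + ‖x - t • γ x‖) + (2 + 2 * ‖x‖) / t := by
  have hinner : |⟪γ x, x - (x - t • γ x)⟫| = t * ‖γ x‖ ^ 2 := by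
    rw [sub_sub_cancel, real_inner_smul_right, real_inner_self_eq_norm_sq,
      abs_of_nonneg (by positivity)]
  have hy : ‖x - t • γ x‖ ≤ ‖x‖ + t * ‖γ x‖ := by
    simpa [norm_smul, abs_of_pos ht] using norm_sub_le x (t • γ x)
  rw [hinner]
  exact le_mul_sq_div_add_div (norm_nonneg _) (by positivity) ht (by positivity) (by linarith)

theorem stmt14_general {d : ℕ}
    (γ : EuclideanSpace ℝ (Fin d) → EuclideanSpace ℝ (Fin d))
    (hγb : ∃ M : ℝ, ∀ x, ‖γ x‖ ≤ M) :
    (⨆ x : EuclideanSpace ℝ (Fin d), ‖γ x‖) ≤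
      ⨆ p : EuclideanSpace ℝ (Fin d) × EuclideanSpace ℝ (Fin d),
        |⟪γ p.1, p.1 - p.2⟫| / (2 + ‖p.1‖ + ‖p.2‖) := by
  obtain ⟨M, hM⟩ := hγb
  refine ciSup_le fun x => le_of_forall_pos_le_add fun ε hε => ?_
  have hc : 0 < 2 + 2 * ‖x‖ := by positivity
  set t := (2 + 2 * ‖x‖) / ε
  have ht : 0 < t := by positivity
  calc ‖γ x‖ ≤ |⟪γ x, x - (x - t • γ x)⟫| / (2 + ‖x‖ + ‖x - t • γ x‖) + (2 + 2 * ‖x‖) / t :=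
        norm_le_abs_inner_sub_div_add γ x ht
    _ ≤ (⨆ p : EuclideanSpace ℝ (Fin d) × EuclideanSpace ℝ (Fin d),
          |⟪γ p.1, p.1 - p.2⟫| / (2 + ‖p.1‖ + ‖p.2‖)) + ε := by
        rw [div_div_cancel₀ hc.ne']
        gcongr
        exact le_ciSup (bddAbove_range_abs_inner_sub_div hM) (x, x - t • γ x)

theorem stmt14 {d : ℕ}
    (γ : EuclideanSpace ℝ (Fin d) → EuclideanSpace ℝ (Fin d))
    (hγc : Continuous γ) (hγb : ∃ M : ℝ, ∀ x, ‖γ x‖ ≤ M) :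
    (⨆ x : EuclideanSpace ℝ (Fin d), ‖γ x‖) ≤
      ⨆ p : EuclideanSpace ℝ (Fin d) × EuclideanSpace ℝ (Fin d),
        |⟪γ p.1, p.1 - p.2⟫| / (2 + ‖p.1‖ + ‖p.2‖) :=
  stmt14_general γ hγb
end

section
/- Let (γ_n) be a sequence of bounded continuous functions γ_n : ℝ^d → ℝ^d and let f : ℝ^d × ℝ^d → ℝ be a continuous function with sup_{(x,y)} |f(x,y)| / (2 + |x| + |y|) < ∞. If sup_{(x,y)} |γ_n(x)·(x − y) − f(x,y)| / (2 + |x| + |y|) → 0 as n → ∞, then there exists a bounded continuous function γ : ℝ^d → ℝ^d such that f(x,y) = γ(x)·(x − y) for all (x,y) ∈ ℝ^d × ℝ^d. (The range of the map T is closed in the weighted norm ‖·‖_ℓ.) -/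
open RealInnerProductSpace Filter Topology

lemma key_norm_le {d : ℕ} (δ x : EuclideanSpace ℝ (Fin d)) (ε : ℝ) (hε : 0 < ε)
    (h : ∀ y : EuclideanSpace ℝ (Fin d), |⟪δ, x - y⟫| ≤ ε * (2 + ‖x‖ + ‖y‖)) :
    ‖δ‖ ≤ ε := by
  rcases eq_or_ne δ 0 with h0 | h0
  · simp [h0]; linarith
  have hδ : 0 < ‖δ‖ := norm_pos_iff.mpr h0
  have hsq : ‖δ‖ * ‖δ‖ ≤ ε * ‖δ‖ := by
    by_contra hc
    push_neg at hc
    set c : ℝ := ‖δ‖ * ‖δ‖ - ε * ‖δ‖ with hcdef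
    have hcpos : 0 < c := by linarith
    have hcne : c ≠ 0 := ne_of_gt hcpos
    set t : ℝ := (ε * (2 + 2 * ‖x‖) + 1) / c with htdef
    have ht : 0 < t := by
      apply div_pos _ hcpos
      positivity
    have htc : t * c = ε * (2 + 2 * ‖x‖) + 1 := div_mul_cancel₀ _ hcne
    have hin : ⟪δ, x - (x - t • δ)⟫ = t * (‖δ‖ * ‖δ‖) := by
      rw [sub_sub_cancel, real_inner_smul_right, real_inner_self_eq_norm_mul_norm]
    have hb := h (x - t • δ)
    rw [hin] at hb
    have habs : |t * (‖δ‖ * ‖δ‖)| = t * (‖δ‖ * ‖δ‖) := by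
      apply abs_of_nonneg; positivity
    rw [habs] at hb
    have hny : ‖x - t • δ‖ ≤ ‖x‖ + t * ‖δ‖ := by
      calc ‖x - t • δ‖ ≤ ‖x‖ + ‖t • δ‖ := norm_sub_le _ _
        _ = ‖x‖ + t * ‖δ‖ := by rw [norm_smul, Real.norm_eq_abs, abs_of_pos ht]
    have hb2 : t * (‖δ‖ * ‖δ‖) ≤ ε * (2 + 2 * ‖x‖) + ε * (t * ‖δ‖) := by nlinarith
    nlinarith [htc, hcdef]
  exact le_of_mul_le_mul_right hsq hδ

theorem stmt15 {d : ℕ}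
    (γ : ℕ → EuclideanSpace ℝ (Fin d) → EuclideanSpace ℝ (Fin d))
    (hγc : ∀ n, Continuous (γ n)) (hγb : ∀ n, ∃ M : ℝ, ∀ x, ‖γ n x‖ ≤ M)
    (f : EuclideanSpace ℝ (Fin d) × EuclideanSpace ℝ (Fin d) → ℝ)
    (hfc : Continuous f)
    -- `f` has finite weighted norm `‖f‖_ℓ < ∞`
    (hfb : ∃ C : ℝ, ∀ p : EuclideanSpace ℝ (Fin d) × EuclideanSpace ℝ (Fin d),
      |f p| ≤ C * (2 + ‖p.1‖ + ‖p.2‖))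
    -- `‖T(γ_n) − f‖_ℓ → 0`
    (hconv : ∀ ε : ℝ, 0 < ε → ∃ N : ℕ, ∀ n ≥ N,
      ∀ p : EuclideanSpace ℝ (Fin d) × EuclideanSpace ℝ (Fin d),
        |⟪γ n p.1, p.1 - p.2⟫ - f p| ≤ ε * (2 + ‖p.1‖ + ‖p.2‖)) :
    ∃ γ₀ : EuclideanSpace ℝ (Fin d) → EuclideanSpace ℝ (Fin d),
      Continuous γ₀ ∧ (∃ M : ℝ, ∀ x, ‖γ₀ x‖ ≤ M) ∧
      ∀ p : EuclideanSpace ℝ (Fin d) × EuclideanSpace ℝ (Fin d),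
        f p = ⟪γ₀ p.1, p.1 - p.2⟫ := by
  -- package γ n as bounded continuous functions
  have hΓ : ∀ n, ∃ F : BoundedContinuousFunction (EuclideanSpace ℝ (Fin d))
      (EuclideanSpace ℝ (Fin d)), ∀ x, F x = γ n x := by
    intro n
    obtain ⟨M, hM⟩ := hγb n
    exact ⟨BoundedContinuousFunction.ofNormedAddCommGroup (γ n) (hγc n) M hM, fun x => rfl⟩
  choose Γ hΓeq using hΓ
  -- uniform closeness of γ n and γ m for large n, m
  have hclose : ∀ ε : ℝ, 0 < ε → ∃ N : ℕ, ∀ n ≥ N, ∀ m ≥ N, ∀ x,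
      ‖γ n x - γ m x‖ ≤ 2 * ε := by
    intro ε hε
    obtain ⟨N, hN⟩ := hconv ε hε
    refine ⟨N, fun n hn m hm x => ?_⟩
    apply key_norm_le _ x _ (by linarith)
    intro y
    have h1 := hN n hn (x, y)
    have h2 := hN m hm (x, y)
    simp only at h1 h2
    have : ⟪γ n x - γ m x, x - y⟫
        = (⟪γ n x, x - y⟫ - f (x, y)) - (⟪γ m x, x - y⟫ - f (x, y)) := by
      rw [inner_sub_left]; ring
    rw [this]
    calc |(⟪γ n x, x - y⟫ - f (x, y)) - (⟪γ m x, x - y⟫ - f (x, y))|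
        ≤ |⟪γ n x, x - y⟫ - f (x, y)| + |⟪γ m x, x - y⟫ - f (x, y)| := abs_sub _ _
      _ ≤ ε * (2 + ‖x‖ + ‖y‖) + ε * (2 + ‖x‖ + ‖y‖) := add_le_add h1 h2
      _ = 2 * ε * (2 + ‖x‖ + ‖y‖) := by ring
  -- Cauchy sequence in the space of bounded continuous functions
  have hcauchy : CauchySeq Γ := by
    rw [Metric.cauchySeq_iff]
    intro ε hε
    obtain ⟨N, hN⟩ := hclose (ε / 8) (by linarith)
    refine ⟨N, fun m hm n hn => ?_⟩
    have hd : dist (Γ m) (Γ n) ≤ ε / 2 := by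
      apply (BoundedContinuousFunction.dist_le (by linarith)).mpr
      intro x
      rw [dist_eq_norm, hΓeq, hΓeq]
      calc ‖γ m x - γ n x‖ ≤ 2 * (ε / 8) := hN m hm n hn x
        _ ≤ ε / 2 := by linarith
    linarith
  obtain ⟨Γ₀, hlim⟩ := cauchySeq_tendsto_of_complete hcauchy
  refine ⟨fun x => Γ₀ x, Γ₀.continuous, ⟨‖Γ₀‖, fun x => Γ₀.norm_coe_le_norm x⟩, ?_⟩
  intro p
  -- pointwise convergence
  have h1 : Tendsto (fun n => γ n p.1) atTop (𝓝 (Γ₀ p.1)) := by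
    rw [Metric.tendsto_atTop] at hlim ⊢
    intro ε hε
    obtain ⟨N, hN⟩ := hlim ε hε
    refine ⟨N, fun n hn => lt_of_le_of_lt ?_ (hN n hn)⟩
    rw [← hΓeq]
    exact BoundedContinuousFunction.dist_coe_le_dist p.1
  have h2 : Tendsto (fun n => ⟪γ n p.1, p.1 - p.2⟫) atTop (𝓝 ⟪Γ₀ p.1, p.1 - p.2⟫) :=
    h1.inner tendsto_const_nhds
  have h3 : Tendsto (fun n => ⟪γ n p.1, p.1 - p.2⟫) atTop (𝓝 (f p)) := by
    rw [Metric.tendsto_atTop]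
    intro ε hε
    have hw : (0:ℝ) < 2 + ‖p.1‖ + ‖p.2‖ := by positivity
    obtain ⟨N, hN⟩ := hconv (ε / (2 * (2 + ‖p.1‖ + ‖p.2‖))) (by positivity)
    refine ⟨N, fun n hn => ?_⟩
    have := hN n hn p
    rw [Real.dist_eq]
    calc |⟪γ n p.1, p.1 - p.2⟫ - f p|
        ≤ ε / (2 * (2 + ‖p.1‖ + ‖p.2‖)) * (2 + ‖p.1‖ + ‖p.2‖) := this
      _ = ε / 2 := by field_simp
      _ < ε := by linarith
  exact tendsto_nhds_unique h3 h2
end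

section
/- For any finite positive Borel measures α and β on X with finite first moments, Q(α) + Q(β) = Q(α + β); that is, η ∈ Q(α + β) if and only if η = η₁ + η₂ for some η₁ ∈ Q(α) and η₂ ∈ Q(β). -/
open MeasureTheory RealInnerProductSpace

noncomputable section

variable {d : ℕ}

/-- The set `Q(α)` of finite positive martingale measures on `X × X` with finite
first moments and first marginal `α`. -/
def Qmart (X : Set (EuclideanSpace ℝ (Fin d))) (α : Measure ↥X) :
    Set (Measure (↥X × ↥X)) :=
  {η | IsFiniteMeasure η ∧
    Integrable (fun p : ↥X × ↥X =>
      2 + ‖(p.1 : EuclideanSpace ℝ (Fin d))‖ + ‖(p.2 : EuclideanSpace ℝ (Fin d))‖) η ∧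
    η.map Prod.fst = α ∧
    ∀ γ : ↥X → EuclideanSpace ℝ (Fin d), Continuous γ → (∃ M : ℝ, ∀ x, ‖γ x‖ ≤ M) →
      (∫ p : ↥X × ↥X,
        ⟪γ p.1, (p.1 : EuclideanSpace ℝ (Fin d)) - (p.2 : EuclideanSpace ℝ (Fin d))⟫ ∂η) = 0}

/-!
Given `η ∈ Q(α + β)`, split it with the densities `dα/d(α + β)` and `dβ/d(α + β)` evaluated at the
first coordinate; the two pieces sum to `η` and have first marginals `α` and `β`. They are again
martingale measures: testing the martingale condition against `g(x) γ(x)` for bounded continuous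
`g` shows that the positive and negative parts of `⟪γ(x), x - y⟫ η`, pushed to the first
coordinate, are finite measures with the same integrals against all bounded continuous functions,
hence equal, and so the condition survives multiplication of `η` by any density in `x`.
-/

open scoped ENNReal BoundedContinuousFunction

section Densities

variable {Ω A : Type*} [MeasurableSpace Ω] [MeasurableSpace A] {η : Measure Ω} {T : Ω → A}

lemma map_withDensity_comp (hT : Measurable T) {f : A → ℝ≥0∞} (hf : Measurable f) :
    (η.withDensity (f ∘ T)).map T = (η.map T).withDensity f := by
  ext s hs
  rw [Measure.map_apply hT hs, withDensity_apply _ hs, withDensity_apply _ (hT hs),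
    setLIntegral_map hs hf hT]
  rfl

lemma map_withDensity_rnDeriv_comp (hT : Measurable T) {μ ν : Measure A}
    [ν.HaveLebesgueDecomposition μ] (hμ : η.map T = μ) (hν : ν ≪ μ) :
    (η.withDensity (ν.rnDeriv μ ∘ T)).map T = ν := by
  rw [map_withDensity_comp hT (Measure.measurable_rnDeriv ν μ), hμ,
    Measure.withDensity_rnDeriv_eq ν μ hν]

lemma withDensity_rnDeriv_comp_add_withDensity_rnDeriv_comp (hT : Measurable T)
    {α β : Measure A} [IsFiniteMeasure α] [IsFiniteMeasure β] (hαβ : η.map T = α + β) :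
    η.withDensity (α.rnDeriv (α + β) ∘ T) + η.withDensity (β.rnDeriv (α + β) ∘ T) = η := by
  have h_one : ∀ᵐ a ∂η.map T, α.rnDeriv (α + β) a + β.rnDeriv (α + β) a = 1 := by
    rw [hαβ]
    filter_upwards [Measure.rnDeriv_add α β (α + β), Measure.rnDeriv_self (α + β)]
      with a h_add h_self
    rw [← Pi.add_apply, ← h_add, h_self]
  have h_one_comp : α.rnDeriv (α + β) ∘ T + β.rnDeriv (α + β) ∘ T =ᵐ[η] 1 :=
    ae_of_ae_map hT.aemeasurable h_one
  rw [← withDensity_add_left ((Measure.measurable_rnDeriv _ _).comp hT),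
    withDensity_congr_ae h_one_comp, withDensity_one]

lemma lintegral_withDensity_comp_eq_lintegral_map (hT : Measurable T) {f : A → ℝ≥0∞}
    (hf : Measurable f) {F : Ω → ℝ≥0∞} (hF : Measurable F) :
    ∫⁻ ω, F ω ∂η.withDensity (f ∘ T) = ∫⁻ a, f a ∂(η.withDensity F).map T := by
  rw [lintegral_withDensity_eq_lintegral_mul _ (hf.comp hT) hF, lintegral_map hf hT, mul_comm]
  exact (lintegral_withDensity_eq_lintegral_mul η hF (hf.comp hT)).symm

lemma integral_map_withDensity_ofReal (hT : Measurable T) {G : Ω → ℝ} (hG : Measurable G)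
    {g : A → ℝ} (hg : Measurable g) :
    ∫ a, g a ∂(η.withDensity fun ω => ENNReal.ofReal (G ω)).map T =
      ∫ ω, max (G ω) 0 * g (T ω) ∂η := by
  rw [integral_map hT.aemeasurable hg.aestronglyMeasurable,
    integral_withDensity_eq_integral_toReal_smul hG.ennreal_ofReal
      (ae_of_all _ fun _ => ENNReal.ofReal_lt_top)]
  simp only [ENNReal.toReal_ofReal', smul_eq_mul]

variable [TopologicalSpace A] [HasOuterApproxClosed A] [BorelSpace A]

lemma map_withDensity_ofReal_eq_map_withDensity_ofReal_neg (hT : Measurable T) {G : Ω → ℝ}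
    (hGm : Measurable G) (hG : Integrable G η)
    (h_zero : ∀ g : A →ᵇ ℝ, ∫ ω, g (T ω) * G ω ∂η = 0) :
    (η.withDensity fun ω => ENNReal.ofReal (G ω)).map T =
      (η.withDensity fun ω => ENNReal.ofReal (-G ω)).map T := by
  have := isFiniteMeasure_withDensity_ofReal hG.2
  have : IsFiniteMeasure (η.withDensity fun ω => ENNReal.ofReal (-G ω)) :=
    isFiniteMeasure_withDensity_ofReal hG.neg.2
  refine ext_of_forall_integral_eq_of_IsFiniteMeasure fun g => ?_
  have hgT : ∀ᵐ ω ∂η, ‖g (T ω)‖ ≤ ‖g‖ := ae_of_all _ fun ω => g.norm_coe_le_norm (T ω)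
  have hgT_meas : AEStronglyMeasurable (fun ω => g (T ω)) η :=
    (g.continuous.measurable.comp hT).aestronglyMeasurable
  rw [integral_map_withDensity_ofReal hT hGm g.continuous.measurable,
    integral_map_withDensity_ofReal hT (G := fun ω => -G ω) hGm.neg g.continuous.measurable,
    ← sub_eq_zero,
    ← integral_sub (hG.pos_part.mul_bdd hgT_meas hgT)
      (Integrable.mul_bdd (f := fun ω => max (-G ω) 0) hG.neg.pos_part hgT_meas hgT)]
  simp_rw [← sub_mul, max_zero_sub_max_neg_zero_eq_self]
  simpa only [mul_comm] using h_zero g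

lemma integral_withDensity_comp_eq_zero (hT : Measurable T) {G : Ω → ℝ}
    (hGm : Measurable G) (hG : Integrable G η)
    (h_zero : ∀ g : A →ᵇ ℝ, ∫ ω, g (T ω) * G ω ∂η = 0) {f : A → ℝ≥0∞} (hf : Measurable f) :
    ∫ ω, G ω ∂η.withDensity (f ∘ T) = 0 := by
  by_cases hi : Integrable G (η.withDensity (f ∘ T))
  · rw [integral_eq_lintegral_pos_part_sub_lintegral_neg_part hi, sub_eq_zero,
      lintegral_withDensity_comp_eq_lintegral_map hT hf hGm.ennreal_ofReal,
      lintegral_withDensity_comp_eq_lintegral_map hT hf (F := fun ω => ENNReal.ofReal (-G ω))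
        hGm.neg.ennreal_ofReal,
      map_withDensity_ofReal_eq_map_withDensity_ofReal_neg hT hGm hG h_zero]
  · exact integral_undef hi

end Densities

local notation "E" => EuclideanSpace ℝ (Fin d)

lemma abs_real_inner_sub_le {F : Type*} [NormedAddCommGroup F] [InnerProductSpace ℝ F]
    (v x y : F) : |⟪v, x - y⟫| ≤ ‖v‖ * (2 + ‖x‖ + ‖y‖) :=
  (abs_real_inner_le_norm _ _).trans <| mul_le_mul_of_nonneg_left
    (by linarith [norm_sub_le x y]) (norm_nonneg _)

lemma integrable_inner_sub {X : Set E} {η : Measure (X × X)}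
    (hη : Integrable (fun p : X × X => 2 + ‖(p.1 : E)‖ + ‖(p.2 : E)‖) η) {γ : X → E}
    (hγ : Continuous γ) {M : ℝ} (hM : ∀ x, ‖γ x‖ ≤ M) :
    Integrable (fun p : X × X => ⟪γ p.1, (p.1 : E) - p.2⟫) η := by
  refine (hη.const_mul M).mono' (by fun_prop : Continuous _).aestronglyMeasurable
    (ae_of_all _ fun p => ?_)
  exact (abs_real_inner_sub_le (γ p.1) p.1 p.2).trans
    (mul_le_mul_of_nonneg_right (hM p.1) (by positivity))

lemma integral_inner_sub_withDensity_fst_eq_zero {X : Set E} {μ : Measure X}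
    {η : Measure (X × X)} (hη : η ∈ Qmart X μ) {f : X → ℝ≥0∞} (hf : Measurable f) {γ : X → E}
    (hγ : Continuous γ) {M : ℝ} (hM : ∀ x, ‖γ x‖ ≤ M) :
    ∫ p, ⟪γ p.1, (p.1 : E) - p.2⟫ ∂η.withDensity (f ∘ Prod.fst) = 0 := by
  refine integral_withDensity_comp_eq_zero measurable_fst (by fun_prop : Continuous _).measurable
    (integrable_inner_sub hη.2.1 hγ hM) (fun g => ?_) hf
  have hgγ_bdd : ∀ x, ‖g x • γ x‖ ≤ ‖g‖ * M := fun x => by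
    rw [norm_smul]
    exact mul_le_mul (g.norm_coe_le_norm x) (hM x) (norm_nonneg _) (norm_nonneg _)
  simpa only [real_inner_smul_left] using
    hη.2.2.2 (fun x => g x • γ x) (g.continuous.smul hγ) ⟨_, hgγ_bdd⟩

lemma withDensity_fst_mem_Qmart {X : Set E} {μ ν : Measure X} {η : Measure (X × X)}
    (hη : η ∈ Qmart X μ) {f : X → ℝ≥0∞} (hf : Measurable f) (hle : η.withDensity (f ∘ Prod.fst) ≤ η)
    (hν : (η.withDensity (f ∘ Prod.fst)).map Prod.fst = ν) :
    η.withDensity (f ∘ Prod.fst) ∈ Qmart X ν := by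
  have := hη.1
  exact ⟨isFiniteMeasure_of_le η hle, hη.2.1.mono_measure hle, hν,
    fun γ hγ ⟨M, hM⟩ => integral_inner_sub_withDensity_fst_eq_zero hη hf hγ hM⟩

lemma add_mem_Qmart {X : Set E} {α β : Measure X} {η₁ η₂ : Measure (X × X)}
    (h₁ : η₁ ∈ Qmart X α) (h₂ : η₂ ∈ Qmart X β) : η₁ + η₂ ∈ Qmart X (α + β) := by
  obtain ⟨hfin₁, hint₁, hmap₁, hmart₁⟩ := h₁
  obtain ⟨hfin₂, hint₂, hmap₂, hmart₂⟩ := h₂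
  refine ⟨inferInstance, hint₁.add_measure hint₂, by
    rw [Measure.map_add _ _ measurable_fst, hmap₁, hmap₂], fun γ hγ ⟨M, hM⟩ => ?_⟩
  rw [integral_add_measure (integrable_inner_sub hint₁ hγ hM) (integrable_inner_sub hint₂ hγ hM),
    hmart₁ γ hγ ⟨M, hM⟩, hmart₂ γ hγ ⟨M, hM⟩, add_zero]

theorem stmt16_general
    (X : Set (EuclideanSpace ℝ (Fin d)))
    (α β : Measure ↥X) [IsFiniteMeasure α] [IsFiniteMeasure β]
    (η : Measure (↥X × ↥X)) :
    η ∈ Qmart X (α + β) ↔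
      ∃ η₁ ∈ Qmart X α, ∃ η₂ ∈ Qmart X β, η = η₁ + η₂ := by
  refine ⟨fun hη => ?_, fun ⟨η₁, h₁, η₂, h₂, hη⟩ => hη ▸ add_mem_Qmart h₁ h₂⟩
  have hmap := hη.2.2.1
  have hsum := withDensity_rnDeriv_comp_add_withDensity_rnDeriv_comp measurable_fst hmap
  have hα : α ≪ α + β := (Measure.le_add_right le_rfl).absolutelyContinuous
  have hβ : β ≪ α + β := (Measure.le_add_left le_rfl).absolutelyContinuous
  refine ⟨_, withDensity_fst_mem_Qmart hη (Measure.measurable_rnDeriv _ _)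
      ((Measure.le_add_right le_rfl).trans_eq hsum)
      (map_withDensity_rnDeriv_comp measurable_fst hmap hα),
    _, withDensity_fst_mem_Qmart hη (Measure.measurable_rnDeriv _ _)
      ((Measure.le_add_left le_rfl).trans_eq hsum)
      (map_withDensity_rnDeriv_comp measurable_fst hmap hβ),
    hsum.symm⟩

theorem stmt16
    (X : Set (EuclideanSpace ℝ (Fin d))) (hXcl : IsClosed X) (hXcv : Convex ℝ X)
    (α β : Measure ↥X) [IsFiniteMeasure α] [IsFiniteMeasure β]
    (hα : Integrable (fun x : ↥X => ‖(x : EuclideanSpace ℝ (Fin d))‖) α)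
    (hβ : Integrable (fun x : ↥X => ‖(x : EuclideanSpace ℝ (Fin d))‖) β)
    (η : Measure (↥X × ↥X)) :
    η ∈ Qmart X (α + β) ↔
      ∃ η₁ ∈ Qmart X α, ∃ η₂ ∈ Qmart X β, η = η₁ + η₂ :=
  stmt16_general X α β η

end
end

section
/- Let E be a real Banach space and K a subset of its topological dual E′. Suppose that for each R > 0 there exists a convex, weak*-closed set L_R ⊆ E′ such that K ∩ B̄_R ⊆ L_R ⊆ K, where B̄_R is the closed ball of radius R centered at the origin of E′. Then K is convex and weak*-closed (i.e. regularly convex). -/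
/-!
This is the Krein–Šmulian theorem. Convexity of `K` is immediate, since any two points of `K` lie
in a common ball. For weak-* closedness of a convex `C` whose bounded parts are weak-* closed,
translate a point `ψ₀ ∉ C` to `0`. The set `C ∩ B̄₁` is norm closed, so `C` misses some ball `B̄ᵣ`.
By Banach–Alaoglu compactness one finds inductively finite sets `Fₙ` in the ball of radius
`(r + n)⁻¹` of `E` such that no `ψ ∈ C` of norm at most `r + n + 1` lies in the polar of
`F₀ ∪ ⋯ ∪ Fₙ`. The points of `⋃ Fₙ` form a null family `(xᵢ)`, and `ψ ↦ (ψ xᵢ)ᵢ` maps `C` to a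
convex subset of `c₀` missing its open unit ball. Hahn–Banach in `c₀` gives a summable `(αᵢ)`
with `∑ αᵢ ψ xᵢ ≥ 1` on `C`; for `x₀ = ∑ αᵢ xᵢ` the weak-* neighbourhood `{ψ | ψ x₀ < 1}` of `0`
is disjoint from `C`.
-/

open Filter Metric Set Topology ZeroAtInfty

namespace ZeroAtInftyContinuousMap

section Norm

variable {α : Type*} [TopologicalSpace α]

theorem norm_apply_le (g : C₀(α, ℝ)) (a : α) : ‖g a‖ ≤ ‖g‖ :=
  norm_toBCF_eq_norm (f := g) ▸ g.toBCF.norm_coe_le_norm a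

theorem norm_le_of_forall_norm_apply_le {g : C₀(α, ℝ)} {c : ℝ} (hc : 0 ≤ c)
    (h : ∀ a, ‖g a‖ ≤ c) : ‖g‖ ≤ c :=
  norm_toBCF_eq_norm (f := g) ▸ (BoundedContinuousFunction.norm_le hc).2 h

theorem exists_one_le_of_forall_one_lt_norm_apply {t : Set C₀(α, ℝ)} (ht : Convex ℝ t)
    (h : ∀ g ∈ t, ∃ a, 1 < ‖g a‖) : ∃ f : StrongDual ℝ C₀(α, ℝ), ∀ g ∈ t, 1 ≤ f g := by
  have hdisj : Disjoint (ball (0 : C₀(α, ℝ)) 1) t := by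
    refine Set.disjoint_left.2 fun g hg hgt => ?_
    obtain ⟨a, ha⟩ := h g hgt
    have := (g.norm_apply_le a).trans_lt (mem_ball_zero_iff.1 hg)
    linarith
  obtain ⟨f, u, hfu, hft⟩ := geometric_hahn_banach_open (convex_ball 0 1) isOpen_ball ht hdisj
  have hu : 0 < u := by simpa using hfu 0 (mem_ball_self one_pos)
  refine ⟨u⁻¹ • f, fun g hg => ?_⟩
  rw [_root_.smul_apply, smul_eq_mul, le_inv_mul_iff₀ hu, mul_one]
  exact hft g hg

end Norm

variable {ι : Type*} [TopologicalSpace ι] [DiscreteTopology ι] [DecidableEq ι]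

def single (i : ι) : C₀(ι, ℝ) where
  toFun := Pi.single i 1
  continuous_toFun := continuous_of_discreteTopology
  zero_at_infty' := by
    rw [cocompact_eq_cofinite]
    refine tendsto_nhds_of_eventually_eq ?_
    filter_upwards [(finite_singleton i).eventually_cofinite_notMem] with j hj
    exact Pi.single_eq_of_ne hj 1

theorem single_apply (i j : ι) : single i j = if j = i then 1 else 0 :=
  Pi.single_apply i 1 j

theorem sum_smul_single_apply (s : Finset ι) (c : ι → ℝ) (j : ι) :
    (∑ i ∈ s, c i • single i) j = if j ∈ s then c j else 0 := by
  have := map_sum (AddMonoidHom.mk' (fun g : C₀(ι, ℝ) => g j) fun _ _ => rfl)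
    (fun i => c i • single i) s
  simp only [AddMonoidHom.mk'_apply] at this
  rw [this]
  simp [single_apply]

theorem hasSum_smul_single (g : C₀(ι, ℝ)) : HasSum (fun i => g i • single i) g := by
  rw [HasSum, SummationFilter.unconditional_filter, Metric.tendsto_nhds]
  intro ε hε
  have hsmall : ∀ᶠ j in cofinite, ‖g j‖ < ε / 2 := by
    have := g.zero_at_infty'
    rw [cocompact_eq_cofinite, tendsto_zero_iff_norm_tendsto_zero] at this
    exact this.eventually (gt_mem_nhds (half_pos hε))
  rw [eventually_cofinite] at hsmall
  filter_upwards [eventually_ge_atTop hsmall.toFinset] with s hs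
  rw [dist_eq_norm]
  refine (norm_le_of_forall_norm_apply_le (half_pos hε).le fun j => ?_).trans_lt (half_lt_self hε)
  rw [sub_apply, sum_smul_single_apply]
  by_cases hj : j ∈ s
  · simp [hj, (half_pos hε).le]
  · have : ‖g j‖ < ε / 2 := by simpa using fun h => hj (hs h)
    simpa [hj] using this.le

theorem hasSum_apply_single_mul (f : StrongDual ℝ C₀(ι, ℝ)) (g : C₀(ι, ℝ)) :
    HasSum (fun i => f (single i) * g i) (f g) := by
  simpa [mul_comm] using (hasSum_smul_single g).mapL f

theorem summable_norm_apply_single (f : StrongDual ℝ C₀(ι, ℝ)) :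
    Summable fun i => ‖f (single i)‖ := by
  refine summable_of_sum_le (c := ‖f‖) (fun i => norm_nonneg _) fun s => ?_
  set g := ∑ i ∈ s, (SignType.sign (f (single i)) : ℝ) • single i
  have hg : ‖g‖ ≤ 1 := by
    refine norm_le_of_forall_norm_apply_le zero_le_one fun j => ?_
    rw [sum_smul_single_apply]
    split_ifs
    · cases SignType.sign (f (single j)) <;> simp
    · simp
  calc ∑ i ∈ s, ‖f (single i)‖ = f g := by simp [g, map_sum]
    _ ≤ ‖f‖ * ‖g‖ := (le_abs_self _).trans (f.le_opNorm g)
    _ ≤ ‖f‖ := mul_le_of_le_one_right (norm_nonneg f) hg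

end ZeroAtInftyContinuousMap

theorem convex_of_forall_inter_closedBall_subset {F : Type*} [SeminormedAddCommGroup F]
    [Module ℝ F] {K : Set F}
    (h : ∀ R : ℝ, 0 < R → ∃ L, Convex ℝ L ∧ K ∩ closedBall 0 R ⊆ L ∧ L ⊆ K) : Convex ℝ K := by
  intro x hx y hy a b ha hb hab
  obtain ⟨L, hL, hKL, hLK⟩ := h (max ‖x‖ ‖y‖ + 1) (by positivity)
  have hxL : x ∈ L := hKL ⟨hx, mem_closedBall_zero_iff.2 (by linarith [le_max_left ‖x‖ ‖y‖])⟩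
  have hyL : y ∈ L := hKL ⟨hy, mem_closedBall_zero_iff.2 (by linarith [le_max_right ‖x‖ ‖y‖])⟩
  exact hLK (hL hxL hyL ha hb hab)

theorem tendsto_subtype_val_cofinite_iUnion {X : Type*} [PseudoMetricSpace X] {a : X}
    {F : ℕ → Set X} (hF : ∀ n, (F n).Finite) {δ : ℕ → ℝ} (hδ : Tendsto δ atTop (𝓝 0))
    (hFδ : ∀ n, F n ⊆ closedBall a (δ n)) :
    Tendsto ((↑) : (⋃ n, F n) → X) cofinite (𝓝 a) := by
  rw [Metric.tendsto_nhds]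
  intro ε hε
  obtain ⟨N, hN⟩ := eventually_atTop.1 (hδ.eventually (gt_mem_nhds hε))
  rw [eventually_cofinite]
  refine (((finite_lt_nat N).biUnion fun n _ => hF n).preimage
    Subtype.val_injective.injOn).subset ?_
  rintro ⟨x, hx⟩ hxε
  obtain ⟨n, hn⟩ := mem_iUnion.1 hx
  exact mem_iUnion₂.2 ⟨n, not_le.1 fun hNn => hxε ((hFδ n hn).trans_lt (hN n hNn)), hn⟩

namespace WeakDual

section RCLike

variable {𝕜 E : Type*} [RCLike 𝕜] [NormedAddCommGroup E] [NormedSpace 𝕜 E]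
  {C : Set (WeakDual 𝕜 E)}

theorem isClosed_inter_closedBall
    (hC : ∀ R : ℝ, 0 < R → IsClosed (C ∩ toStrongDual ⁻¹' closedBall 0 R))
    (φ : StrongDual 𝕜 E) (r : ℝ) : IsClosed (C ∩ toStrongDual ⁻¹' closedBall φ r) := by
  have hsub : closedBall φ r ⊆ closedBall 0 (|r| + ‖φ‖ + 1) :=
    closedBall_subset_closedBall' (by rw [dist_zero_right]; linarith [le_abs_self r])
  have : C ∩ toStrongDual ⁻¹' closedBall φ r
      = C ∩ toStrongDual ⁻¹' closedBall 0 (|r| + ‖φ‖ + 1) ∩ toStrongDual ⁻¹' closedBall φ r := by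
    rw [inter_assoc, ← preimage_inter, inter_eq_right.2 hsub]
  rw [this]
  exact (hC _ (by positivity)).inter (isClosed_closedBall φ r)

theorem exists_pos_inter_closedBall_eq_empty
    (hC : IsClosed (C ∩ toStrongDual ⁻¹' closedBall 0 1)) (h0 : 0 ∉ C) :
    ∃ r > 0, C ∩ toStrongDual ⁻¹' closedBall 0 r = ∅ := by
  have hD : IsClosed (StrongDual.toWeakDual ⁻¹' (C ∩ toStrongDual ⁻¹' closedBall 0 1)) :=
    hC.preimage NormedSpace.Dual.toWeakDual_continuous
  obtain ⟨ε, hε, hεD⟩ := nhds_basis_closedBall.mem_iff.1 (hD.isOpen_compl.mem_nhds fun h => h0 h.1)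
  refine ⟨min ε 1, by positivity, eq_empty_of_forall_notMem fun ψ ⟨hψC, hψr⟩ => ?_⟩
  have hψr' : toStrongDual ψ ∈ closedBall 0 (min ε 1) := hψr
  have hψ1 : toStrongDual ψ ∈ closedBall 0 1 := closedBall_subset_closedBall (min_le_right _ _) hψr'
  exact hεD (closedBall_subset_closedBall (min_le_left _ _) hψr') ⟨hψC, hψ1⟩

theorem exists_finite_subset_closedBall_inter_polar_eq_empty
    (hC : ∀ R : ℝ, 0 < R → IsClosed (C ∩ toStrongDual ⁻¹' closedBall 0 R))
    {ρ ρ' : ℝ} (hρ : 0 < ρ) (hρ' : 0 < ρ') {S : Set E}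
    (hS : C ∩ toStrongDual ⁻¹' closedBall 0 ρ ∩ polar 𝕜 S = ∅) :
    ∃ F : Set E, F.Finite ∧ F ⊆ closedBall 0 ρ⁻¹ ∧
      C ∩ toStrongDual ⁻¹' closedBall 0 ρ' ∩ polar 𝕜 (S ∪ F) = ∅ := by
  set K := C ∩ toStrongDual ⁻¹' closedBall 0 ρ' ∩ polar 𝕜 S
  have hK : IsCompact K := (isCompact_closedBall 0 ρ').of_isClosed_subset
    ((hC ρ' hρ').inter (isClosed_polar 𝕜 S)) fun ψ hψ => hψ.1.2
  have hempty : K ∩ ⋂ x : closedBall (0 : E) ρ⁻¹, {ψ : WeakDual 𝕜 E | ‖ψ x‖ ≤ 1} = ∅ := by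
    refine eq_empty_of_forall_notMem fun ψ ⟨⟨⟨hψC, _⟩, hψS⟩, hψx⟩ => ?_
    have : toStrongDual ψ ∈ closedBall 0 ρ := by
      rw [← inv_inv ρ, ← NormedSpace.polar_closedBall (inv_pos.2 hρ), StrongDual.mem_polar_iff]
      simpa using hψx
    exact hS.subset ⟨⟨hψC, this⟩, hψS⟩
  obtain ⟨t, ht⟩ := hK.elim_finite_subfamily_closed _ (fun x : closedBall (0 : E) ρ⁻¹ =>
    isClosed_le (eval_continuous x.1).norm continuous_const) hempty
  refine ⟨(↑) '' (t : Set (closedBall (0 : E) ρ⁻¹)), t.finite_toSet.image _,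
    by rintro _ ⟨x, -, rfl⟩; exact x.2, ?_⟩
  refine eq_empty_of_forall_notMem fun ψ ⟨⟨hψC, hψρ'⟩, hψSF⟩ => ht.subset ⟨⟨⟨hψC, hψρ'⟩, ?_⟩, ?_⟩
  · exact fun x hx => hψSF x (Or.inl hx)
  · exact mem_iInter₂.2 fun x hx => hψSF x (Or.inr ⟨x, hx, rfl⟩)

theorem exists_finite_seq_inter_polar_iUnion_eq_empty
    (hC : ∀ R : ℝ, 0 < R → IsClosed (C ∩ toStrongDual ⁻¹' closedBall 0 R))
    {r : ℝ} (hr : 0 < r) (hCr : C ∩ toStrongDual ⁻¹' closedBall 0 r = ∅) :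
    ∃ F : ℕ → Set E, (∀ n, (F n).Finite) ∧ (∀ n, F n ⊆ closedBall 0 (r + n)⁻¹) ∧
      C ∩ polar 𝕜 (⋃ n, F n) = ∅ := by
  have step (n : ℕ) (S : Set E) (hS : C ∩ toStrongDual ⁻¹' closedBall 0 (r + n) ∩ polar 𝕜 S = ∅) :
      ∃ F : Set E, F.Finite ∧ F ⊆ closedBall 0 (r + n)⁻¹ ∧
        C ∩ toStrongDual ⁻¹' closedBall 0 (r + (n + 1 : ℕ)) ∩ polar 𝕜 (S ∪ F) = ∅ :=
    exists_finite_subset_closedBall_inter_polar_eq_empty hC (by positivity) (by positivity) hS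
  choose! G hGfin hGball hG using step
  let S : ℕ → Set E := fun n => Nat.rec ∅ (fun k s => s ∪ G k s) n
  have hS (n : ℕ) : C ∩ toStrongDual ⁻¹' closedBall 0 (r + n) ∩ polar 𝕜 (S n) = ∅ := by
    induction n with
    | zero => simpa [S, polar_def] using hCr
    | succ n ih => exact hG n (S n) ih
  have hSsub (n : ℕ) : S n ⊆ ⋃ k, G k (S k) := by
    induction n with
    | zero => exact empty_subset _
    | succ n ih => exact union_subset ih (subset_iUnion (fun k => G k (S k)) n)
  refine ⟨fun n => G n (S n), fun n => hGfin n (S n) (hS n), fun n => hGball n (S n) (hS n), ?_⟩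
  refine eq_empty_of_forall_notMem fun ψ ⟨hψC, hψX⟩ => ?_
  obtain ⟨n, hn⟩ := exists_nat_ge (‖toStrongDual ψ‖ - r)
  refine (hS n).subset ⟨⟨hψC, ?_⟩, ?_⟩
  · rw [mem_preimage, mem_closedBall_zero_iff]; linarith
  · exact fun x hx => hψX x (hSsub n hx)

end RCLike

variable {E : Type*} [NormedAddCommGroup E] [NormedSpace ℝ E] [CompleteSpace E]
  {C : Set (WeakDual ℝ E)}

theorem exists_one_le_apply_of_disjoint_polar {ι : Type*} {x : ι → E}
    (hx : Tendsto x cofinite (𝓝 0)) (hconv : Convex ℝ C)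
    (hCx : Disjoint C (polar ℝ (range x))) : ∃ x₀ : E, ∀ ψ ∈ C, 1 ≤ ψ x₀ := by
  classical
  -- with the discrete topology on `ι`, `C₀(ι, ℝ)` is the sequence space `c₀(ι)`
  let _ : TopologicalSpace ι := ⊥
  have _ : DiscreteTopology ι := ⟨rfl⟩
  let T : WeakDual ℝ E →ₗ[ℝ] C₀(ι, ℝ) :=
    { toFun := fun ψ =>
        { toFun := fun i => ψ (x i)
          continuous_toFun := continuous_of_discreteTopology
          zero_at_infty' := by
            rw [cocompact_eq_cofinite]
            exact ((toStrongDual ψ).continuous.tendsto' 0 0 (map_zero _)).comp hx }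
      map_add' := fun _ _ => rfl
      map_smul' := fun _ _ => rfl }
  have hT : ∀ g ∈ T '' C, ∃ i, 1 < ‖g i‖ := by
    rintro _ ⟨ψ, hψ, rfl⟩
    have : ψ ∉ polar ℝ (range x) := hCx.notMem_of_mem_left hψ
    simp only [polar_def, mem_ofPred_eq, forall_mem_range, not_forall, not_le] at this
    exact this
  obtain ⟨f, hf⟩ := ZeroAtInftyContinuousMap.exists_one_le_of_forall_one_lt_norm_apply
    (hconv.linear_image T) hT
  let α i := f (ZeroAtInftyContinuousMap.single i)
  obtain ⟨M, hM⟩ := hx.norm.bddAbove_range_of_cofinite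
  have hsum : Summable fun i => α i • x i :=
    ((ZeroAtInftyContinuousMap.summable_norm_apply_single f).mul_right M).of_norm_bounded
      fun i => by rw [norm_smul]; exact mul_le_mul_of_nonneg_left (hM ⟨i, rfl⟩) (norm_nonneg _)
  refine ⟨∑' i, α i • x i, fun ψ hψ => ?_⟩
  have hψx : HasSum (fun i => α i * T ψ i) (ψ (∑' i, α i • x i)) := by
    have := hsum.hasSum.mapL (toStrongDual ψ)
    simp only [map_smul, smul_eq_mul] at this
    exact this
  rw [hψx.unique (ZeroAtInftyContinuousMap.hasSum_apply_single_mul f (T ψ))]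
  exact hf _ ⟨ψ, hψ, rfl⟩

theorem exists_one_le_apply_of_zero_notMem (hconv : Convex ℝ C)
    (hC : ∀ R : ℝ, 0 < R → IsClosed (C ∩ toStrongDual ⁻¹' closedBall 0 R)) (h0 : 0 ∉ C) :
    ∃ x₀ : E, ∀ ψ ∈ C, 1 ≤ ψ x₀ := by
  obtain ⟨r, hr, hCr⟩ := exists_pos_inter_closedBall_eq_empty (hC 1 one_pos) h0
  obtain ⟨F, hFfin, hFr, hCF⟩ := exists_finite_seq_inter_polar_iUnion_eq_empty hC hr hCr
  have hδ : Tendsto (fun n : ℕ => (r + n)⁻¹) atTop (𝓝 0) :=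
    tendsto_inv_atTop_zero.comp (tendsto_atTop_add_const_left _ r tendsto_natCast_atTop_atTop)
  refine exists_one_le_apply_of_disjoint_polar
    (tendsto_subtype_val_cofinite_iUnion hFfin hδ hFr) hconv ?_
  rwa [Subtype.range_coe, disjoint_iff_inter_eq_empty]

theorem isClosed_of_convex_of_isClosed_inter_closedBall (hconv : Convex ℝ C)
    (hC : ∀ R : ℝ, 0 < R → IsClosed (C ∩ toStrongDual ⁻¹' closedBall 0 R)) : IsClosed C := by
  refine isOpen_compl_iff.1 (isOpen_iff_mem_nhds.2 fun ψ₀ hψ₀ => ?_)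
  have hC₀ (R : ℝ) (hR : 0 < R) : IsClosed ((ψ₀ + ·) ⁻¹' C ∩ toStrongDual ⁻¹' closedBall 0 R) := by
    have : (ψ₀ + ·) ⁻¹' C ∩ toStrongDual ⁻¹' closedBall 0 R
        = (ψ₀ + ·) ⁻¹' (C ∩ toStrongDual ⁻¹' closedBall (toStrongDual ψ₀) R) := by
      ext ψ; simp [dist_eq_norm]
    rw [this]
    exact (isClosed_inter_closedBall hC _ R).preimage (continuous_const_add ψ₀)
  obtain ⟨x₀, hx₀⟩ := exists_one_le_apply_of_zero_notMem
    (hconv.translate_preimage_right ψ₀) hC₀ (by simpa using hψ₀)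
  have hU : IsOpen {ψ : WeakDual ℝ E | ψ x₀ < ψ₀ x₀ + 1} :=
    isOpen_lt (eval_continuous x₀) continuous_const
  refine mem_of_superset (hU.mem_nhds (by simp)) fun ψ hψ hψC => ?_
  have h1 : 1 ≤ ψ x₀ - ψ₀ x₀ := hx₀ (ψ - ψ₀) (by simpa using hψC)
  linarith [show ψ x₀ < ψ₀ x₀ + 1 from hψ]

end WeakDual

open NormedSpace

theorem stmt18
    (E : Type*) [NormedAddCommGroup E] [NormedSpace ℝ E] [CompleteSpace E]
    (K : Set (StrongDual ℝ E))
    (hK : ∀ R : ℝ, 0 < R → ∃ L : Set (StrongDual ℝ E),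
      Convex ℝ L ∧
      IsClosed ((fun φ : StrongDual ℝ E => StrongDual.toWeakDual φ) '' L :
        Set (WeakDual ℝ E)) ∧
      K ∩ Metric.closedBall 0 R ⊆ L ∧ L ⊆ K) :
    Convex ℝ K ∧
    IsClosed ((fun φ : StrongDual ℝ E => StrongDual.toWeakDual φ) '' K :
      Set (WeakDual ℝ E)) := by
  have hconv : Convex ℝ K := convex_of_forall_inter_closedBall_subset fun R hR =>
    let ⟨L, hL, _, hKL, hLK⟩ := hK R hR
    ⟨L, hL, hKL, hLK⟩
  refine ⟨hconv, WeakDual.isClosed_of_convex_of_isClosed_inter_closedBall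
    (hconv.linear_image StrongDual.toWeakDual.toLinearMap) fun R hR => ?_⟩
  obtain ⟨L, -, hLc, hKL, hLK⟩ := hK R hR
  convert hLc.inter (WeakDual.isClosed_closedBall 0 R) using 1
  ext ψ
  constructor
  · rintro ⟨⟨φ, hφ, rfl⟩, hψR⟩
    exact ⟨⟨φ, hKL ⟨hφ, hψR⟩, rfl⟩, hψR⟩
  · rintro ⟨⟨φ, hφ, rfl⟩, hψR⟩
    exact ⟨⟨φ, hLK hφ, rfl⟩, hψR⟩
end
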